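/- arXiv:1512.05834 — 6 statements merged into one kernel-verified Lean document; each statement's English description precedes it below -/
import Mathlib

section
/- The Weak Spectral Property is an open property: if an n×n real symmetric matrix A has the WSP, then there exists ε > 0 such that for every n×n real symmetric matrix E with ‖E‖ < ε, the matrix A + E has the WSP. -/
open scoped Matrix.Norms.L2Operator

/-- A real symmetric matrix `A` has the Weak Spectral Property (WSP) if the only real
symmetric matrix `X` with zero diagonal that commutes with `A` is `X = 0`. -/
def HasWSP {ι : Type*} [Fintype ι] [DecidableEq ι] (A : Matrix ι ι ℝ) : Prop :=
  ∀ X : Matrix ι ι ℝ, X.IsSymm → (∀ i, X i i = 0) → X * A = A * X → X = 0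

/-!
The WSP of `A` says that `X ↦ X * A - A * X` is injective on the finite-dimensional space of
symmetric matrices with zero diagonal, hence bounded below there: `‖X‖ ≤ C ‖X * A - A * X‖`.
If such an `X` commutes with `A + E`, then `X * A - A * X = E * X - X * E` has norm at most
`2 ‖E‖ ‖X‖`, so `‖X‖ ≤ 2 C ‖E‖ ‖X‖`, which forces `X = 0` once `‖E‖ < 1 / (2 C)`.
-/

theorem LinearMap.exists_norm_le_mul_norm_of_disjoint_ker {𝕜 E F : Type*}
    [NontriviallyNormedField 𝕜] [CompleteSpace 𝕜] [NormedAddCommGroup E] [NormedSpace 𝕜 E]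
    [FiniteDimensional 𝕜 E] [NormedAddCommGroup F] [NormedSpace 𝕜 F]
    (f : E →ₗ[𝕜] F) {S : Submodule 𝕜 E} (hS : Disjoint S (LinearMap.ker f)) :
    ∃ C > 0, ∀ x ∈ S, ‖x‖ ≤ C * ‖f x‖ := by
  have hinj : LinearMap.ker (f.domRestrict S) = ⊥ :=
    LinearMap.ker_eq_bot.mpr (LinearMap.injective_domRestrict_iff.mpr hS)
  obtain ⟨K, hK, hanti⟩ := (f.domRestrict S).exists_antilipschitzWith hinj
  refine ⟨K, hK, fun x hx => ?_⟩
  simpa using hanti.le_mul_norm_sub 0 ⟨x, hx⟩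

theorem norm_mul_sub_mul_le {R : Type*} [NonUnitalSeminormedRing R] (a b : R) :
    ‖a * b - b * a‖ ≤ 2 * ‖a‖ * ‖b‖ :=
  calc ‖a * b - b * a‖ ≤ ‖a * b‖ + ‖b * a‖ := norm_sub_le _ _
    _ ≤ ‖a‖ * ‖b‖ + ‖b‖ * ‖a‖ := add_le_add (norm_mul_le _ _) (norm_mul_le _ _)
    _ = 2 * ‖a‖ * ‖b‖ := by ring

namespace Matrix

variable {ι R : Type*}

def symmZeroDiag (R ι : Type*) [CommRing R] : Submodule R (Matrix ι ι R) where
  carrier := {X | X.IsSymm ∧ ∀ i, X i i = 0}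
  add_mem' := fun ⟨hXs, hXd⟩ ⟨hYs, hYd⟩ => ⟨hXs.add hYs, fun i => by simp [hXd i, hYd i]⟩
  zero_mem' := ⟨isSymm_zero, fun _ => rfl⟩
  smul_mem' := fun c _ ⟨hXs, hXd⟩ => ⟨hXs.smul c, fun i => by simp [hXd i]⟩

theorem mem_symmZeroDiag [CommRing R] {X : Matrix ι ι R} :
    X ∈ symmZeroDiag R ι ↔ X.IsSymm ∧ ∀ i, X i i = 0 :=
  Iff.rfl

variable [Fintype ι]

def commutatorRight [CommRing R] (A : Matrix ι ι R) : Matrix ι ι R →ₗ[R] Matrix ι ι R :=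
  LinearMap.mulRight R A - LinearMap.mulLeft R A

theorem commutatorRight_apply [CommRing R] (A X : Matrix ι ι R) :
    commutatorRight A X = X * A - A * X :=
  rfl

end Matrix

section

open Matrix

variable {ι : Type*} [Fintype ι] [DecidableEq ι] {A : Matrix ι ι ℝ}

theorem hasWSP_iff_disjoint_ker_commutatorRight :
    HasWSP A ↔ Disjoint (symmZeroDiag ℝ ι) (LinearMap.ker (commutatorRight A)) := by
  simp only [Submodule.disjoint_def, LinearMap.mem_ker, commutatorRight_apply, sub_eq_zero,
    mem_symmZeroDiag, HasWSP, and_imp]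

theorem HasWSP.exists_norm_le_mul_norm_commutator (hW : HasWSP A) :
    ∃ C > 0, ∀ X : Matrix ι ι ℝ, X.IsSymm → (∀ i, X i i = 0) →
      ‖X‖ ≤ C * ‖X * A - A * X‖ := by
  obtain ⟨C, hC, hbound⟩ := (commutatorRight A).exists_norm_le_mul_norm_of_disjoint_ker
    (hasWSP_iff_disjoint_ker_commutatorRight.mp hW)
  exact ⟨C, hC, fun X hXs hXd => hbound X ⟨hXs, hXd⟩⟩

end

theorem hasWSP_open_general {n : ℕ} (A : Matrix (Fin n) (Fin n) ℝ)
    (hW : HasWSP A) :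
    ∃ ε > 0, ∀ E : Matrix (Fin n) (Fin n) ℝ, E.IsSymm → ‖E‖ < ε → HasWSP (A + E) := by
  obtain ⟨C, hC, hbound⟩ := hW.exists_norm_le_mul_norm_commutator
  refine ⟨(2 * C)⁻¹, by positivity, fun E _ hE X hXs hXd hXc => ?_⟩
  have hcomm : X * A - A * X = E * X - X * E := by
    rw [mul_add, add_mul] at hXc
    rw [sub_eq_sub_iff_add_eq_add, hXc, add_comm]
  have hsmall : 2 * C * ‖E‖ < 1 := by
    rwa [← mul_one (2 * C)⁻¹, lt_inv_mul_iff₀ (by positivity)] at hE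
  have hX : ‖X‖ ≤ 2 * C * ‖E‖ * ‖X‖ :=
    calc ‖X‖ ≤ C * ‖E * X - X * E‖ := hcomm ▸ hbound X hXs hXd
      _ ≤ C * (2 * ‖E‖ * ‖X‖) := by gcongr; exact norm_mul_sub_mul_le E X
      _ = 2 * C * ‖E‖ * ‖X‖ := by ring
  exact norm_le_zero_iff.mp (by nlinarith [norm_nonneg X])

/-- The WSP is an open property: if `A` has the WSP, then every sufficiently small
symmetric perturbation `A + E` of `A` also has the WSP.  Here `‖·‖` is the operator norm
induced by the Euclidean vector norm. -/
theorem hasWSP_open {n : ℕ} (A : Matrix (Fin n) (Fin n) ℝ) (hA : A.IsSymm)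
    (hW : HasWSP A) :
    ∃ ε > 0, ∀ E : Matrix (Fin n) (Fin n) ℝ, E.IsSymm → ‖E‖ < ε → HasWSP (A + E) :=
  hasWSP_open_general A hW
end

section
/- Let A and B be real symmetric matrices (of sizes m×m and k×k respectively) that both have the Weak Spectral Property and that have no common eigenvalue. Then the block-diagonal direct sum A ⊕ B (the (m+k)×(m+k) matrix with blocks A and B on the diagonal and zeros elsewhere) also has the Weak Spectral Property. -/
namespace Matrix

theorem mem_spectrum_of_mulVec_eq_smul {K n : Type*} [Field K] [Fintype n] [DecidableEq n]
    {A : Matrix n n K} {v : n → K} {μ : K} (hv : v ≠ 0) (hAv : A *ᵥ v = μ • v) :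
    μ ∈ spectrum K A := by
  rw [← spectrum_toLin']
  exact (Module.End.hasEigenvalue_of_hasEigenvector
    ⟨Module.End.mem_eigenspace_iff.mpr hAv, hv⟩).mem_spectrum

theorem eq_zero_of_mul_eq_mul_of_disjoint_spectrum {𝕜 m n : Type*} [RCLike 𝕜] [Fintype m]
    [Fintype n] [DecidableEq m] [DecidableEq n] {A : Matrix m m 𝕜} {B : Matrix n n 𝕜}
    (hB : B.IsHermitian) (hAB : Disjoint (spectrum ℝ A) (spectrum ℝ B)) {Q : Matrix m n 𝕜}
    (hQ : A * Q = Q * B) : Q = 0 := by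
  set U : Matrix n n 𝕜 := (hB.eigenvectorUnitary : Matrix n n 𝕜)
  have hQv (j : n) : Q *ᵥ hB.eigenvectorBasis j = 0 := by
    by_contra hne
    refine Set.disjoint_left.mp hAB ?_ (hB.eigenvalues_mem_spectrum_real j)
    rw [← spectrum.algebraMap_mem_iff 𝕜]
    refine mem_spectrum_of_mulVec_eq_smul hne ?_
    rw [mulVec_mulVec, hQ, ← mulVec_mulVec, hB.mulVec_eigenvectorBasis, mulVec_smul,
      RCLike.real_smul_eq_coe_smul (K := 𝕜)]
  have hQU : Q * U = 0 := ext_of_mulVec_single fun j => by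
    rw [← mulVec_mulVec, hB.eigenvectorUnitary_mulVec, hQv, zero_mulVec]
  calc Q = Q * U * star U := by
        rw [Matrix.mul_assoc, Unitary.mul_star_self_of_mem hB.eigenvectorUnitary.2, Matrix.mul_one]
    _ = 0 := by rw [hQU, Matrix.zero_mul]

theorem mul_fromBlocks_zero_zero_comm_iff {R m n : Type*} [Fintype m] [Fintype n] [Ring R]
    {A : Matrix m m R} {B : Matrix n n R} {X : Matrix (m ⊕ n) (m ⊕ n) R} :
    X * fromBlocks A 0 0 B = fromBlocks A 0 0 B * X ↔
      X.toBlocks₁₁ * A = A * X.toBlocks₁₁ ∧ X.toBlocks₁₂ * B = A * X.toBlocks₁₂ ∧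
        X.toBlocks₂₁ * A = B * X.toBlocks₂₁ ∧ X.toBlocks₂₂ * B = B * X.toBlocks₂₂ := by
  conv_lhs => rw [← X.fromBlocks_toBlocks, fromBlocks_multiply, fromBlocks_multiply]
  simp only [Matrix.mul_zero, Matrix.zero_mul, add_zero, zero_add, fromBlocks_inj]

end Matrix

theorem hasWSP_fromBlocks_general {m k : ℕ}
    (A : Matrix (Fin m) (Fin m) ℝ) (B : Matrix (Fin k) (Fin k) ℝ)
    (hB : B.IsSymm) (hAW : HasWSP A) (hBW : HasWSP B)
    (hdisj : ∀ μ : ℝ, ¬ (μ ∈ spectrum ℝ A ∧ μ ∈ spectrum ℝ B)) :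
    HasWSP (Matrix.fromBlocks A 0 0 B) := by
  intro X hX hXdiag hXcomm
  obtain ⟨h₁₁, h₁₂, -, h₂₂⟩ := Matrix.mul_fromBlocks_zero_zero_comm_iff.mp hXcomm
  rw [← X.fromBlocks_toBlocks] at hX ⊢
  obtain ⟨hX₁₁, hX₂₁, -, hX₂₂⟩ := Matrix.isSymm_fromBlocks_iff.mp hX
  have hX₁₂ : X.toBlocks₁₂ = 0 :=
    Matrix.eq_zero_of_mul_eq_mul_of_disjoint_spectrum hB
      (Set.disjoint_left.mpr fun μ hμA hμB => hdisj μ ⟨hμA, hμB⟩) h₁₂.symm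
  rw [← hX₂₁, hX₁₂, hAW _ hX₁₁ (fun i => hXdiag (.inl i)) h₁₁,
    hBW _ hX₂₂ (fun i => hXdiag (.inr i)) h₂₂, Matrix.transpose_zero, Matrix.fromBlocks_zero]

/-- If the real symmetric matrices `A` (of size `m × m`) and `B` (of size `k × k`) both
have the WSP and have no common eigenvalue, then their block-diagonal direct sum
`A ⊕ B` also has the WSP. -/
theorem hasWSP_fromBlocks {m k : ℕ}
    (A : Matrix (Fin m) (Fin m) ℝ) (B : Matrix (Fin k) (Fin k) ℝ)
    (hA : A.IsSymm) (hB : B.IsSymm) (hAW : HasWSP A) (hBW : HasWSP B)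
    (hdisj : ∀ μ : ℝ, ¬ (μ ∈ spectrum ℝ A ∧ μ ∈ spectrum ℝ B)) :
    HasWSP (Matrix.fromBlocks A 0 0 B) :=
  hasWSP_fromBlocks_general A B hB hAW hBW hdisj
end

section
/- If an n×n real symmetric matrix A has the Weak Spectral Property and c is a real number that is not an eigenvalue of A, then the (n+1)×(n+1) matrix A ⊕ [c] (the block-diagonal matrix with blocks A and the 1×1 matrix [c]) has the Weak Spectral Property. -/
/-!
A symmetric `X` commuting with `A ⊕ D` splits into blocks `X₁₁`, `X₁₂`, `X₁₂ᵀ`, `X₂₂` with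
`X₁₁` commuting with `A`, `X₂₂` commuting with `D` and `A X₁₂ = X₁₂ D`. The WSP of `A` and `D`
kills the diagonal blocks; for `D = [c]` the off-diagonal equation reads `(c - A) X₁₂ = 0`,
and `c - A` is invertible because `c` is not an eigenvalue of `A`.
-/

theorem Matrix.eq_zero_of_mul_eq_smul {ι κ R : Type*} [Fintype ι] [DecidableEq ι] [CommRing R]
    {A : Matrix ι ι R} {c : R} (hc : c ∉ spectrum R A) {Y : Matrix ι κ R}
    (hY : A * Y = c • Y) : Y = 0 := by
  have hdet : IsUnit (algebraMap R _ c - A).det := by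
    rwa [← Matrix.isUnit_iff_isUnit_det, ← spectrum.notMem_iff]
  have hker : (algebraMap R (Matrix ι ι R) c - A) * Y = 0 := by
    rw [Algebra.algebraMap_eq_smul_one, Matrix.sub_mul, Matrix.smul_mul, Matrix.one_mul, hY,
      sub_self]
  rw [← Matrix.nonsing_inv_mul_cancel_left _ Y hdet, hker, Matrix.mul_zero]

theorem Matrix.of_const_eq_smul_one {ι R : Type*} [DecidableEq ι] [Subsingleton ι] [Semiring R]
    (c : R) : Matrix.of (fun _ _ : ι => c) = c • 1 := by
  ext i j
  rw [Subsingleton.elim i j]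
  simp

namespace HasWSP

variable {ι κ : Type*} [Fintype ι] [DecidableEq ι] [Fintype κ] [DecidableEq κ]

theorem of_subsingleton [Subsingleton ι] (A : Matrix ι ι ℝ) : HasWSP A := by
  intro X _ hXd _
  ext i j
  rw [Subsingleton.elim i j, hXd, Matrix.zero_apply]

theorem reindex {A : Matrix ι ι ℝ} (hA : HasWSP A) (e : ι ≃ κ) :
    HasWSP (Matrix.reindex e e A) := by
  intro X hXs hXd hXc
  set f := Matrix.reindexAlgEquiv ℝ ℝ e.symm
  have hfA : f (Matrix.reindex e e A) = A := by simp [f]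
  have hfX : f X = 0 := by
    refine hA (f X) ?_ (fun i => hXd (e i)) ?_
    · simp only [f, Matrix.coe_reindexAlgEquiv, Matrix.IsSymm, Matrix.transpose_reindex, hXs.eq]
    · rw [← hfA, ← map_mul, ← map_mul, hXc]
  simpa using congrArg f.symm hfX

theorem fromBlocks {A : Matrix ι ι ℝ} {D : Matrix κ κ ℝ} (hA : HasWSP A) (hD : HasWSP D)
    (hAD : ∀ Y : Matrix ι κ ℝ, A * Y = Y * D → Y = 0) :
    HasWSP (Matrix.fromBlocks A 0 0 D) := by
  intro X hXs hXd hXc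
  rw [← X.fromBlocks_toBlocks] at hXs hXc ⊢
  obtain ⟨h11s, h12t, -, h22s⟩ := Matrix.isSymm_fromBlocks_iff.mp hXs
  simp only [Matrix.fromBlocks_multiply, Matrix.fromBlocks_inj, Matrix.mul_zero, Matrix.zero_mul,
    add_zero, zero_add] at hXc
  obtain ⟨h11, h12, -, h22⟩ := hXc
  have h12z : X.toBlocks₁₂ = 0 := hAD _ h12.symm
  rw [hA _ h11s (fun i => hXd (Sum.inl i)) h11, hD _ h22s (fun i => hXd (Sum.inr i)) h22,
    ← h12t, h12z, Matrix.transpose_zero, Matrix.fromBlocks_zero]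

end HasWSP

theorem hasWSP_append_scalar_general {n : ℕ} (A : Matrix (Fin n) (Fin n) ℝ)
    (hW : HasWSP A) (c : ℝ) (hc : c ∉ spectrum ℝ A) :
    HasWSP ((Matrix.reindex finSumFinEquiv finSumFinEquiv
      (Matrix.fromBlocks A 0 0 (Matrix.of fun _ _ : Fin 1 => c))) :
        Matrix (Fin (n + 1)) (Fin (n + 1)) ℝ) := by
  refine (hW.fromBlocks (.of_subsingleton _) fun Y hY => ?_).reindex _
  rw [Matrix.of_const_eq_smul_one, Matrix.mul_smul, Matrix.mul_one] at hY
  exact Matrix.eq_zero_of_mul_eq_smul hc hY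

/-- If an `n × n` real symmetric matrix `A` has the WSP and `c` is a real number that is
not an eigenvalue of `A`, then the `(n+1) × (n+1)` block-diagonal matrix `A ⊕ [c]`
has the WSP. -/
theorem hasWSP_append_scalar {n : ℕ} (A : Matrix (Fin n) (Fin n) ℝ) (hA : A.IsSymm)
    (hW : HasWSP A) (c : ℝ) (hc : c ∉ spectrum ℝ A) :
    HasWSP ((Matrix.reindex finSumFinEquiv finSumFinEquiv
      (Matrix.fromBlocks A 0 0 (Matrix.of fun _ _ : Fin 1 => c))) :
        Matrix (Fin (n + 1)) (Fin (n + 1)) ℝ) :=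
  hasWSP_append_scalar_general A hW c hc
end

section
/- Given a simple graph G on n vertices labeled 1,…,n and a set Λ = {λ₁, λ₂, …, λₙ} of n distinct real numbers, there exists an n×n real symmetric matrix A whose graph is G and whose multiset of eigenvalues is exactly Λ (each λᵢ with multiplicity one). -/
/-!
For small `ε` we tune the diagonal `d` so that `diagonal d + ε • A`, with `A` the adjacency matrix
of `G`, has every `λ k` as an eigenvalue. At `ε = 0` the choice `d = λ` works, and the Jacobian
of `d ↦ (χ_{diagonal d}(λ k))_k = (∏ j (λ k - d j))_k` at `d = λ` is diagonal with entries
`-∏_{j ≠ k} (λ k - λ j) ≠ 0`. The implicit function theorem therefore gives such a `d` for every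
small `ε`; any `ε ≠ 0` then yields a symmetric matrix whose graph is `G`, and a monic polynomial of
degree `n` vanishing at the `n` distinct `λ k` is `∏ k (X - λ k)`.
-/

open Polynomial Matrix Finset Filter Topology

theorem Polynomial.Monic.eq_prod_X_sub_C_of_eval_eq_zero {R ι : Type*} [CommRing R] [IsDomain R]
    [Fintype ι] {p : R[X]} (hp : p.Monic) (hdeg : p.natDegree = Fintype.card ι) {l : ι → R}
    (hl : Function.Injective l) (hroot : ∀ i, p.eval (l i) = 0) :
    p = ∏ i, (X - C (l i)) := by
  have hq : (∏ i, (X - C (l i))).Monic := monic_prod_of_monic _ _ fun i _ => monic_X_sub_C (l i)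
  have hqdeg : (∏ i, (X - C (l i))).natDegree = Fintype.card ι := by
    simp [natDegree_prod _ _ fun i _ => X_sub_C_ne_zero (l i)]
  refine eq_of_degree_sub_lt_of_eval_index_eq univ hl.injOn ?_ fun i _ => by
    rw [hroot i, eval_prod, prod_eq_zero (mem_univ i) (by rw [eval_sub, eval_X, eval_C, sub_self])]
  calc (p - ∏ i, (X - C (l i))).degree < p.degree :=
        degree_sub_lt_left (by rw [degree_eq_natDegree hp.ne_zero, degree_eq_natDegree hq.ne_zero,
          hdeg, hqdeg]) hp.ne_zero (by rw [hp.leadingCoeff, hq.leadingCoeff])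
    _ = #univ := by rw [degree_eq_natDegree hp.ne_zero, hdeg, card_univ]

theorem ContinuousLinearMap.isInvertible_pi_smul_proj {𝕜 ι : Type*} [Field 𝕜]
    [TopologicalSpace 𝕜] [IsTopologicalRing 𝕜] {c : ι → 𝕜} (hc : ∀ i, c i ≠ 0) :
    (pi fun i => c i • proj i : (ι → 𝕜) →L[𝕜] ι → 𝕜).IsInvertible :=
  .of_inverse (g := pi fun i => (c i)⁻¹ • proj i) (by ext; simp [hc]) (by ext; simp [hc])

variable {ι : Type*} [Fintype ι] [DecidableEq ι]

theorem hasFDerivAt_pi_prod_sub {𝕜 : Type*} [NontriviallyNormedField 𝕜] (l : ι → 𝕜) :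
    HasFDerivAt (fun d : ι → 𝕜 => fun k => ∏ j, (l k - d j))
      (ContinuousLinearMap.pi fun k => (-∏ j ∈ univ.erase k, (l k - l j)) •
        (ContinuousLinearMap.proj k : (ι → 𝕜) →L[𝕜] 𝕜)) l := by
  refine hasFDerivAt_pi.2 fun k => ?_
  simp_rw [← mul_prod_erase univ _ (mem_univ k)]
  have h := ((hasFDerivAt_apply (𝕜 := 𝕜) k l).const_sub (l k)).fun_mul
    (HasFDerivAt.finsetProd (u := univ.erase k) fun j _ =>
      (hasFDerivAt_apply (𝕜 := 𝕜) j l).const_sub (l k))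
  refine h.congr_fderiv ?_
  ext w
  simp

variable {𝕜 : Type*} [RCLike 𝕜]

theorem ContDiff.matrix_det {E : Type*} [NormedAddCommGroup E] [NormedSpace 𝕜 E]
    {n : WithTop ℕ∞} {M : E → Matrix ι ι 𝕜} (hM : ∀ i j, ContDiff 𝕜 n fun x => M x i j) :
    ContDiff 𝕜 n fun x => (M x).det := by
  simp only [det_apply']
  exact ContDiff.sum fun σ _ => contDiff_const.mul (contDiff_prod fun i _ => hM _ _)

namespace Matrix

theorem contDiff_eval_charpoly_diagonal_add_smul (A : Matrix ι ι 𝕜) (t : 𝕜) {n : WithTop ℕ∞} :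
    ContDiff 𝕜 n fun p : 𝕜 × (ι → 𝕜) => (diagonal p.2 + p.1 • A).charpoly.eval t := by
  simp only [eval_charpoly]
  refine ContDiff.matrix_det fun i j => ?_
  simp only [scalar_apply, sub_apply, add_apply, smul_apply, smul_eq_mul, diagonal_apply]
  split_ifs <;> fun_prop

theorem eventually_exists_charpoly_diagonal_add_smul_eq_prod (A : Matrix ι ι 𝕜) {l : ι → 𝕜}
    (hl : Function.Injective l) :
    ∀ᶠ ε in 𝓝 (0 : 𝕜), ∃ d : ι → 𝕜, (diagonal d + ε • A).charpoly = ∏ i, (X - C (l i)) := by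
  set f : 𝕜 × (ι → 𝕜) → ι → 𝕜 := fun p k => (diagonal p.2 + p.1 • A).charpoly.eval (l k)
  have hf : ContDiff 𝕜 1 f :=
    contDiff_pi.2 fun k => contDiff_eval_charpoly_diagonal_add_smul A (l k)
  have hf_diagonal : (fun d => f (0, d)) = fun d k => ∏ j, (l k - d j) := by
    funext d k; simp [f, charpoly_diagonal, eval_prod]
  have hderiv := ((hf.differentiable one_ne_zero (0, l)).hasFDerivAt.comp l
    (hasFDerivAt_prodMk_right (0 : 𝕜) l)).unique (hf_diagonal ▸ hasFDerivAt_pi_prod_sub l)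
  have hinv : (fderiv 𝕜 f (0, l) ∘L .inr 𝕜 𝕜 (ι → 𝕜)).IsInvertible := by
    rw [hderiv]
    exact ContinuousLinearMap.isInvertible_pi_smul_proj fun k => neg_ne_zero.2 <|
      prod_ne_zero_iff.2 fun j hj => sub_ne_zero.2 (hl.ne (ne_of_mem_erase hj).symm)
  filter_upwards [hf.contDiffAt.eventually_apply_implicitFunction one_ne_zero hinv] with ε hε
  refine ⟨hf.contDiffAt.implicitFunction one_ne_zero hinv ε,
    (charpoly_monic _).eq_prod_X_sub_C_of_eval_eq_zero (charpoly_natDegree_eq_dim _) hl fun k => ?_⟩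
  have hk := congrFun hε k
  simp only [f] at hk
  rw [hk, zero_smul, add_zero, charpoly_diagonal, eval_prod]
  exact prod_eq_zero (mem_univ k) (by simp)

end Matrix

/-- Given a simple graph `G` on `n` vertices and `n` distinct real numbers `λ i`, there
exists an `n × n` real symmetric matrix `A` whose graph is `G` (off-diagonal entry `A i j`
is nonzero iff `i` and `j` are adjacent in `G`) and whose eigenvalues, counted with
multiplicity, are exactly the `λ i` (so its characteristic polynomial is `∏ i (X - λ i)`). -/
theorem finite_lambda_siep {n : ℕ} (G : SimpleGraph (Fin n)) (l : Fin n → ℝ)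
    (hl : Function.Injective l) :
    ∃ A : Matrix (Fin n) (Fin n) ℝ, A.IsSymm ∧
      (∀ i j : Fin n, i ≠ j → (A i j ≠ 0 ↔ G.Adj i j)) ∧
      A.charpoly = ∏ i : Fin n, (Polynomial.X - Polynomial.C (l i)) := by
  classical
  have hsmall := eventually_exists_charpoly_diagonal_add_smul_eq_prod (G.adjMatrix ℝ) hl
  obtain ⟨ε, ⟨d, hd⟩, hε : ε ≠ 0⟩ :=
    ((eventually_nhdsWithin_of_eventually_nhds hsmall).and self_mem_nhdsWithin).exists
      (f := 𝓝[≠] 0)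
  refine ⟨diagonal d + ε • G.adjMatrix ℝ, (isSymm_diagonal d).add (G.isSymm_adjMatrix.smul ε),
    fun i j hij => ?_, hd⟩
  simp [diagonal_apply_ne _ hij, SimpleGraph.adjMatrix_apply, hε]
end

section
/- Let A be an n×n real symmetric matrix that has the Weak Spectral Property and has n distinct eigenvalues. Then the n×n real matrix J whose (k,i)-entry is the i-th diagonal entry of A^{k−1} (for k, i ∈ {1,…,n}, with A⁰ = I) is nonsingular. Equivalently, the only real polynomial p of degree at most n−1 such that all diagonal entries of p(A) vanish is the zero polynomial. -/
/-!
Suppose `J` were singular, with `c ≠ 0` in the left kernel, and let `p = ∑ₖ cₖ Xᵏ`, a nonzero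
polynomial of degree `< n`. Then `c J` is the diagonal of `p(A)`, so `p(A)` is a symmetric matrix
with zero diagonal commuting with `A`, and the WSP forces `p(A) = 0`. By spectral mapping `p`
then vanishes at each of the `n` distinct eigenvalues of `A`, which is impossible for a nonzero
polynomial of degree `< n`.
-/

open Polynomial

theorem spectrum.eval_eq_zero_of_aeval_eq_zero {K B : Type*} [Field K] [Ring B] [Algebra K B]
    {a : B} {p : K[X]} {μ : K} (hp : aeval a p = 0) (hμ : μ ∈ spectrum K a) : p.eval μ = 0 := by
  have hmem := spectrum.subset_polynomial_aeval a p ⟨μ, hμ, rfl⟩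
  rw [hp, spectrum.mem_iff, sub_zero] at hmem
  by_contra hne
  exact hmem ((Ne.isUnit hne).map (algebraMap K B))

namespace Matrix

section CommRing

variable {R ι : Type*} [CommRing R] [Fintype ι] [DecidableEq ι]

theorem transpose_aeval (A : Matrix ι ι R) (p : R[X]) : (aeval A p)ᵀ = aeval Aᵀ p := by
  simp only [aeval_eq_sum_range, transpose_sum, transpose_smul, transpose_pow]

theorem IsSymm.aeval {A : Matrix ι ι R} (hA : A.IsSymm) (p : R[X]) : (aeval A p).IsSymm := by
  rw [IsSymm, transpose_aeval, hA.eq]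

theorem commute_aeval (A : Matrix ι ι R) (p : R[X]) : Commute A (aeval A p) := by
  simpa using (Commute.all X p).map (aeval A)

theorem vecMul_of_pow_diag (A : Matrix ι ι R) {n : ℕ} (c : Fin n → R) :
    c ᵥ* of (fun (k : Fin n) i => (A ^ (k : ℕ)) i i) =
      (aeval A ((degreeLTEquiv R n).symm c : R[X])).diag := by
  ext i
  simp [degreeLTEquiv, aeval_monomial, ← Algebra.smul_def, vecMul, dotProduct, sum_apply]

end CommRing

theorem eq_zero_of_aeval_eq_zero_of_charpoly_eq_prod {K ι : Type*} [Field K] [Fintype ι]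
    [DecidableEq ι] {A : Matrix ι ι K} {l : ι → K} (hl : Function.Injective l)
    (hcp : A.charpoly = ∏ i, (X - C (l i))) {p : K[X]} (hp : aeval A p = 0)
    (hdeg : p.degree < Fintype.card ι) : p = 0 := by
  by_contra hp0
  refine hp0 (eq_zero_of_natDegree_lt_card_of_eval_eq_zero p hl (fun i => ?_)
    ((natDegree_lt_iff_degree_lt hp0).mpr hdeg))
  have hroot : A.charpoly.IsRoot (l i) := by
    simp [hcp, eval_prod, Finset.prod_eq_zero_iff, sub_eq_zero]
  exact spectrum.eval_eq_zero_of_aeval_eq_zero hp (mem_spectrum_of_isRoot_charpoly hroot)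

end Matrix

theorem HasWSP.aeval_eq_zero_of_diag_eq_zero {ι : Type*} [Fintype ι] [DecidableEq ι]
    {A : Matrix ι ι ℝ} (hW : HasWSP A) (hA : A.IsSymm) {p : ℝ[X]} (hp : (aeval A p).diag = 0) :
    aeval A p = 0 :=
  hW _ (hA.aeval p) (congrFun hp) (A.commute_aeval p).eq.symm

/-- If an `n × n` real symmetric matrix `A` has the WSP and has `n` distinct eigenvalues,
then the `n × n` matrix `J` whose `(k, i)` entry is the `i`-th diagonal entry of `A ^ k`
(rows indexed by `k = 0, 1, …, n - 1`) is nonsingular. -/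
theorem jacobian_nonsingular {n : ℕ} (A : Matrix (Fin n) (Fin n) ℝ) (hA : A.IsSymm)
    (hW : HasWSP A)
    (hdist : ∃ l : Fin n → ℝ, Function.Injective l ∧
      A.charpoly = ∏ i : Fin n, (Polynomial.X - Polynomial.C (l i))) :
    (Matrix.of fun k i : Fin n => (A ^ (k : ℕ)) i i).det ≠ 0 := by
  obtain ⟨l, hl, hcp⟩ := hdist
  intro hdet
  obtain ⟨c, hc0, hc⟩ := Matrix.exists_vecMul_eq_zero_iff.mpr hdet
  set p : degreeLT ℝ n := (degreeLTEquiv ℝ n).symm c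
  rw [Matrix.vecMul_of_pow_diag] at hc
  have hp : (p : ℝ[X]) = 0 :=
    A.eq_zero_of_aeval_eq_zero_of_charpoly_eq_prod hl hcp
      (hW.aeval_eq_zero_of_diag_eq_zero hA hc) (by simpa using mem_degreeLT.mp p.2)
  exact hc0 (by simpa [p] using congrArg (degreeLTEquiv ℝ n) (Subtype.ext hp : p = 0))
end

section
/- Let D₁ be the diagonal operator on ℓ²(ℕ) with diagonal sequence (1, 1/2, 1/3, …) and let D₂ be the diagonal operator on ℓ²(ℕ) with diagonal sequence (0, 1, 1/2, 1/3, …). Then D₁ and D₂ are approximately unitarily equivalent, but they are not unitarily equivalent (there is no single unitary U on ℓ²(ℕ) with D₁ = U* D₂ U). -/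
/-- The complex Hilbert space `ℓ²(ℕ)`. -/
noncomputable abbrev ellTwo : Type := lp (fun _ : ℕ => ℂ) 2

/-- The standard orthonormal basis vectors of `ℓ²(ℕ)`. -/
noncomputable def stdBasis (n : ℕ) : ellTwo := lp.single 2 n 1

/-- Conjugation of an operator `T` on `H₂` by a unitary isomorphism `U : H₁ ≃ H₂`,
giving the operator `U* T U` on `H₁`. -/
noncomputable def conjOp {H₁ H₂ : Type*} [NormedAddCommGroup H₁] [InnerProductSpace ℂ H₁]
    [NormedAddCommGroup H₂] [InnerProductSpace ℂ H₂]
    (U : H₁ ≃ₗᵢ[ℂ] H₂) (T : H₂ →L[ℂ] H₂) : H₁ →L[ℂ] H₁ :=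
  U.symm.toLinearIsometry.toContinuousLinearMap ∘L T ∘L U.toLinearIsometry.toContinuousLinearMap

/-- Two bounded operators `T₁` and `T₂` on complex Hilbert spaces `H₁` and `H₂` are
approximately unitarily equivalent if there is a sequence of unitary isomorphisms
`U n : H₁ ≃ H₂` with `‖T₁ - (U n)* T₂ (U n)‖ → 0`. -/
def ApproxUnitarilyEquiv {H₁ H₂ : Type*} [NormedAddCommGroup H₁] [InnerProductSpace ℂ H₁]
    [NormedAddCommGroup H₂] [InnerProductSpace ℂ H₂]
    (T₁ : H₁ →L[ℂ] H₁) (T₂ : H₂ →L[ℂ] H₂) : Prop :=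
  ∃ U : ℕ → (H₁ ≃ₗᵢ[ℂ] H₂),
    Filter.Tendsto (fun n => ‖T₁ - conjOp (U n) T₂‖) Filter.atTop (nhds 0)

/-! Conjugating `D₂` by the permutation unitary of the cycle `0 ↦ 1 ↦ ⋯ ↦ N ↦ 0` turns it into
the diagonal operator with entries `(1, 1/2, …, 1/N, 0, 1/(N+1), 1/(N+2), …)`, which differs from
`D₁` by a diagonal operator with entries of size at most `1/(N+1)`. On the other hand `D₂` kills
`e₀` while `D₁` is injective, and injectivity is invariant under unitary conjugation. -/

open scoped ENNReal

namespace lp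

variable {ι 𝕜 : Type*} [RCLike 𝕜]

section Diagonal

variable [DecidableEq ι] {p : ℝ≥0∞} [Fact (1 ≤ p)]

def HasDiagonal (T : lp (fun _ : ι => 𝕜) p →L[𝕜] lp (fun _ : ι => 𝕜) p) (μ : ι → 𝕜) : Prop :=
  ∀ i, T (lp.single p i 1) = μ i • lp.single p i 1

variable {T S : lp (fun _ : ι => 𝕜) p →L[𝕜] lp (fun _ : ι => 𝕜) p} {μ ν : ι → 𝕜}

theorem HasDiagonal.sub (hT : HasDiagonal T μ) (hS : HasDiagonal S ν) :
    HasDiagonal (T - S) (μ - ν) := fun i => by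
  simp only [sub_apply, hT i, hS i, Pi.sub_apply, sub_smul]

theorem HasDiagonal.apply_apply (hp : p ≠ ⊤) (hT : HasDiagonal T μ)
    (x : lp (fun _ : ι => 𝕜) p) (i : ι) : T x i = μ i * x i := by
  have hsingle : ∀ j, T (lp.single p j (x j)) = lp.single p j (μ j * x j) := fun j => by
    calc T (lp.single p j (x j)) = T (x j • lp.single p j 1) := by
          rw [← lp.single_smul, smul_eq_mul, mul_one]
      _ = lp.single p j (μ j * x j) := by
          rw [map_smul, hT j, smul_smul, ← lp.single_smul, smul_eq_mul, mul_one, mul_comm]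
  have hsum : HasSum (fun j => lp.single p j (μ j * x j) i) (T x i) := by
    have h := ((lp.hasSum_single hp x).mapL T).mapL (lp.evalCLM 𝕜 (fun _ : ι => 𝕜) p i)
    simp only [hsingle] at h
    exact h
  rw [hsum.unique (hasSum_single i fun j hj => lp.single_apply_ne p j _ (Ne.symm hj)),
    lp.single_apply_self]

theorem HasDiagonal.opNorm_le (hp : p ≠ ⊤) (hT : HasDiagonal T μ) {C : ℝ} (hC : 0 ≤ C)
    (hμ : ∀ i, ‖μ i‖ ≤ C) : ‖T‖ ≤ C := by
  refine T.opNorm_le_bound hC fun x => ?_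
  have hp₀ : p ≠ 0 := (zero_lt_one.trans_le Fact.out).ne'
  calc ‖T x‖ ≤ ‖C • x‖ := lp.norm_mono hp₀ fun i => by
        rw [hT.apply_apply hp, norm_mul, lp.coeFn_smul, Pi.smul_apply, norm_smul,
          Real.norm_of_nonneg hC]
        exact mul_le_mul_of_nonneg_right (hμ i) (norm_nonneg _)
    _ = C * ‖x‖ := by rw [norm_smul, Real.norm_of_nonneg hC]

theorem HasDiagonal.injective (hp : p ≠ ⊤) (hT : HasDiagonal T μ) (hμ : ∀ i, μ i ≠ 0) :
    Function.Injective T := fun x y hxy => lp.ext <| funext fun i => by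
  have hi := congrArg (fun z => z i) hxy
  simp only [hT.apply_apply hp] at hi
  exact mul_left_cancel₀ (hμ i) hi

end Diagonal

noncomputable def reindexL2 (σ : ι ≃ ι) : ℓ²(ι, 𝕜) ≃ₗᵢ[𝕜] ℓ²(ι, 𝕜) :=
  let b : HilbertBasis ι 𝕜 ℓ²(ι, 𝕜) := default
  (HilbertBasis.mk (b.orthonormal.comp σ σ.injective)
    (by rw [σ.surjective.range_comp, b.dense_span])).repr.symm

section Reindex

variable [DecidableEq ι]

theorem reindexL2_single (σ : ι ≃ ι) (i : ι) :
    reindexL2 σ (lp.single 2 i (1 : 𝕜)) = lp.single 2 (σ i) 1 := by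
  rw [reindexL2, HilbertBasis.repr_symm_single, HilbertBasis.coe_mk, Function.comp_apply,
    ← HilbertBasis.repr_symm_single]
  rfl

theorem HasDiagonal.conjOp_reindexL2 {S : ℓ²(ι, ℂ) →L[ℂ] ℓ²(ι, ℂ)} {ν : ι → ℂ}
    (hS : HasDiagonal S ν) (σ : ι ≃ ι) :
    HasDiagonal (conjOp (reindexL2 σ) S) (ν ∘ σ) := fun i => by
  change (reindexL2 σ).symm (S (reindexL2 σ (lp.single 2 i 1))) = _
  rw [reindexL2_single, hS, map_smul, ← reindexL2_single, LinearIsometryEquiv.symm_apply_apply,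
    Function.comp_apply]

end Reindex

end lp

theorem Function.Injective.of_conjOp {H₁ H₂ : Type*} [NormedAddCommGroup H₁]
    [InnerProductSpace ℂ H₁] [NormedAddCommGroup H₂] [InnerProductSpace ℂ H₂]
    {U : H₁ ≃ₗᵢ[ℂ] H₂} {T : H₂ →L[ℂ] H₂} (h : Function.Injective (conjOp U T)) :
    Function.Injective T := by
  have hT : ⇑T = U ∘ conjOp U T ∘ U.symm := by
    ext x
    simp [conjOp]
  rw [hT]
  exact U.injective.comp (h.comp U.symm.injective)

theorem norm_inv_succ_sub_inv_formPerm_range_le (N n : ℕ) :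
    ‖((n + 1 : ℕ) : ℂ)⁻¹ - (((List.range (N + 1)).formPerm n : ℕ) : ℂ)⁻¹‖ ≤ ((N : ℝ) + 1)⁻¹ := by
  have hcycle : ∀ m ≤ N, (List.range (N + 1)).formPerm m = (m + 1) % (N + 1) := fun m hm => by
    convert List.formPerm_apply_getElem (List.range (N + 1)) List.nodup_range m (by simp; omega)
      <;> simp
  rcases lt_trichotomy n N with h | rfl | h
  · rw [hcycle n h.le, Nat.mod_eq_of_lt (by omega), sub_self, norm_zero]
    positivity
  · rw [hcycle n le_rfl, Nat.mod_self, Nat.cast_zero, inv_zero, sub_zero, norm_inv,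
      Complex.norm_natCast, Nat.cast_succ]
  · have hN : (N : ℝ) + 1 ≤ n := by exact_mod_cast h
    rw [List.formPerm_apply_of_notMem (by simp; omega), ← Complex.ofReal_natCast,
      ← Complex.ofReal_natCast n, ← Complex.ofReal_inv, ← Complex.ofReal_inv,
      ← Complex.ofReal_sub, Complex.norm_real, Real.norm_eq_abs]
    refine abs_sub_le_of_nonneg_of_le (by positivity) (inv_anti₀ (by positivity) ?_)
      (by positivity) (inv_anti₀ (by positivity) hN)
    push_cast
    linarith

/-- The diagonal operators on `ℓ²(ℕ)` with diagonal sequences `(1, 1/2, 1/3, …)` and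
`(0, 1, 1/2, 1/3, …)` are approximately unitarily equivalent, but they are not unitarily
equivalent. -/
theorem diag_approx_equiv_not_unitarily_equiv (D₁ D₂ : ellTwo →L[ℂ] ellTwo)
    (hD₁ : ∀ n : ℕ, D₁ (stdBasis n) = (1 / ((n : ℂ) + 1)) • stdBasis n)
    (hD₂zero : D₂ (stdBasis 0) = 0)
    (hD₂succ : ∀ n : ℕ, D₂ (stdBasis (n + 1)) = (1 / ((n : ℂ) + 1)) • stdBasis (n + 1)) :
    ApproxUnitarilyEquiv D₁ D₂ ∧
      ¬ ∃ U : ellTwo ≃ₗᵢ[ℂ] ellTwo, D₁ = conjOp U D₂ := by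
  have h₁ : lp.HasDiagonal D₁ fun n => ((n + 1 : ℕ) : ℂ)⁻¹ := fun n => by
    simpa [stdBasis] using hD₁ n
  -- `(0 : ℂ)⁻¹ = 0` gives the zero entry of `D₂` for free.
  have h₂ : lp.HasDiagonal D₂ fun n => (n : ℂ)⁻¹
    | 0 => by simpa [stdBasis] using hD₂zero
    | n + 1 => by simpa [stdBasis] using hD₂succ n
  refine ⟨⟨fun N => lp.reindexL2 (List.range (N + 1)).formPerm, ?_⟩, ?_⟩
  · refine squeeze_zero (fun _ => norm_nonneg _) (fun N => ?_)
      tendsto_one_div_add_atTop_nhds_zero_nat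
    rw [one_div]
    exact (h₁.sub (h₂.conjOp_reindexL2 _)).opNorm_le ENNReal.ofNat_ne_top (by positivity)
      (norm_inv_succ_sub_inv_formPerm_range_le N)
  · rintro ⟨U, rfl⟩
    have h₂_not_injective : ¬ Function.Injective D₂ := fun h => by
      have he₀ : stdBasis 0 = 0 := h (hD₂zero.trans (map_zero D₂).symm)
      simpa [stdBasis] using congrArg (fun x : ellTwo => x 0) he₀
    have h₁_injective : Function.Injective (conjOp U D₂) :=
      h₁.injective ENNReal.ofNat_ne_top fun n => inv_ne_zero (Nat.cast_ne_zero.2 n.succ_ne_zero)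
    exact h₂_not_injective h₁_injective.of_conjOp
end
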